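/- On ℝ⁵ with coordinates (x,y,z,p,q), the Ampère transformation x̄ = −p, ȳ = y, z̄ = z − px, p̄ = x, q̄ = q satisfies dp̄ ∧ dq̄ + dx̄ ∧ dȳ = dx ∧ dq + dy ∧ dp as differential 2-forms. Consequently, the Ampère transformation carries the effective 2-form of the Monge–Ampère equation hess z = −1 to that of the wave equation z_{xx} − z_{yy} = 0. -/
import Mathlib

/-- The wedge product of two 1-forms (continuous linear functionals),
evaluated on a pair of tangent vectors. -/
def wedge {E : Type*} [NormedAddCommGroup E] [NormedSpace ℝ E]
    (ω η : E →L[ℝ] ℝ) (u w : E) : ℝ :=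
  ω u * η w - ω w * η u

lemma fderiv_proj (i : Fin 5) (v u : Fin 5 → ℝ) :
    fderiv ℝ (fun t : Fin 5 → ℝ => t i) v u = u i := by
  rw [show (fun t : Fin 5 → ℝ => t i) = ⇑(ContinuousLinearMap.proj i : (Fin 5 → ℝ) →L[ℝ] ℝ) from rfl,
    ContinuousLinearMap.fderiv]
  rfl

lemma fderiv_neg_proj (v u : Fin 5 → ℝ) :
    fderiv ℝ (fun t : Fin 5 → ℝ => -(t 3)) v u = -(u 3) := by
  rw [show (fun t : Fin 5 → ℝ => -(t 3)) = ⇑(-(ContinuousLinearMap.proj 3 : (Fin 5 → ℝ) →L[ℝ] ℝ)) from rfl,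
    ContinuousLinearMap.fderiv]
  rfl

/-- under the Ampère transformation
`x̄ = −p, ȳ = y, z̄ = z − px, p̄ = x, q̄ = q` on `ℝ⁵` (coordinates
`0 ↦ x, 1 ↦ y, 2 ↦ z, 3 ↦ p, 4 ↦ q`), one has
`dp̄ ∧ dq̄ + dx̄ ∧ dȳ = dx ∧ dq + dy ∧ dp` as 2-forms; i.e. the effective
2-form of `hess z = −1` is carried to that of the wave equation. -/
theorem stmt18 :
    ∀ v u w : Fin 5 → ℝ,
      wedge (fderiv ℝ (fun t : Fin 5 → ℝ => t 0) v)
            (fderiv ℝ (fun t : Fin 5 → ℝ => t 4) v) u w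
        + wedge (fderiv ℝ (fun t : Fin 5 → ℝ => -(t 3)) v)
            (fderiv ℝ (fun t : Fin 5 → ℝ => t 1) v) u w
      =
      wedge (fderiv ℝ (fun t : Fin 5 → ℝ => t 0) v)
            (fderiv ℝ (fun t : Fin 5 → ℝ => t 4) v) u w
        + wedge (fderiv ℝ (fun t : Fin 5 → ℝ => t 1) v)
            (fderiv ℝ (fun t : Fin 5 → ℝ => t 3) v) u w := by
  intro v u w
  simp only [wedge, fderiv_proj, fderiv_neg_proj]
  ring
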